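/- For every n ≥ 1 and every integer k with k ≢ 2^n mod 2^{n+1}, the element 1 + e^{ikπ/2^n} is a unit in the subring ℤ[1/2, e^{iπ/2^n}] of ℂ. -/

import Mathlib

open Complex Real

private lemma exists_pow_two_pow_eq_neg_one : ∀ (m : ℕ) (y : ℂ),
    y ^ (2 ^ m) = 1 → y ≠ 1 → ∃ t, y ^ (2 ^ t) = -1 := by
  intro m
  induction m with
  | zero => intro y h hy; simp at h; exact absurd h hy
  | succ m ih =>
    intro y h hy
    have h2 : (y ^ (2 ^ m) - 1) * (y ^ (2 ^ m) + 1) = 0 := by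
      have h1 : (y ^ (2 ^ m)) ^ 2 = 1 := by
        rw [← pow_mul]
        rw [pow_succ] at h
        exact h
      linear_combination h1
    rcases mul_eq_zero.mp h2 with h3 | h3
    · exact ih y (sub_eq_zero.mp h3) hy
    · exact ⟨m, eq_neg_of_add_eq_zero_left h3⟩

theorem one_add_exp_isUnit (n : ℕ) (hn : 1 ≤ n) (k : ℤ)
    (hk : ¬ (k ≡ (2 : ℤ) ^ n [ZMOD (2 : ℤ) ^ (n + 1)])) :
    ∃ hx : (1 + Complex.exp ((k : ℂ) * Real.pi * Complex.I / 2 ^ n)) ∈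
        Subring.closure {(1 : ℂ) / 2, Complex.exp (Real.pi * Complex.I / 2 ^ n)},
      IsUnit (⟨1 + Complex.exp ((k : ℂ) * Real.pi * Complex.I / 2 ^ n), hx⟩ :
        Subring.closure {(1 : ℂ) / 2, Complex.exp (Real.pi * Complex.I / 2 ^ n)}) := by
  set ζ : ℂ := Complex.exp (Real.pi * Complex.I / 2 ^ n) with hζdef
  set R := Subring.closure {(1 : ℂ) / 2, ζ} with hR
  have hζmem : ζ ∈ R := Subring.subset_closure (by simp)
  have hhalf : (1 : ℂ) / 2 ∈ R := Subring.subset_closure (by simp)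
  -- ζ is a primitive 2^(n+1)-th root of unity
  have hprim : IsPrimitiveRoot ζ (2 ^ (n + 1)) := by
    have h := Complex.isPrimitiveRoot_exp (2 ^ (n + 1)) (by positivity)
    convert h using 2
    push_cast
    have h2n : ((2 : ℂ) ^ n) ≠ 0 := pow_ne_zero _ two_ne_zero
    have h2n1 : ((2 : ℂ) ^ (n + 1)) ≠ 0 := pow_ne_zero _ two_ne_zero
    field_simp
    ring
  -- the residue j of k + 2^n mod 2^(n+1)
  set N : ℤ := 2 ^ (n + 1) with hNdef
  set j : ℤ := (k + 2 ^ n) % N with hjdef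
  have hNpos : 0 < N := by positivity
  have hj0 : 0 ≤ j := Int.emod_nonneg _ hNpos.ne'
  have hjlt : j < N := Int.emod_lt_of_pos _ hNpos
  have hjne : j ≠ 0 := by
    intro h0
    apply hk
    have hdvd : N ∣ (k + 2 ^ n) := Int.dvd_of_emod_eq_zero h0
    refine Int.modEq_iff_dvd.mpr ?_
    rw [show (2 : ℤ) ^ n - k = -(k + 2 ^ n) + N by rw [hNdef]; ring]
    exact dvd_add (dvd_neg.mpr hdvd) dvd_rfl
  set m : ℕ := j.toNat with hmdef
  have hmj : (m : ℤ) = j := Int.toNat_of_nonneg hj0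
  -- key identity: ζ ^ m = - exp(k π I / 2^n)
  set q : ℤ := (k + 2 ^ n) / N with hqdef
  have hqe : N * q + j = k + 2 ^ n := Int.mul_ediv_add_emod (k + 2 ^ n) N
  have hjk : j - k = (1 - 2 * q) * 2 ^ n := by
    have : (N : ℤ) = 2 * 2 ^ n := by rw [hNdef]; ring
    linarith [hqe, this ▸ hqe]
  have hkey : ζ ^ m = -Complex.exp ((k : ℂ) * Real.pi * Complex.I / 2 ^ n) := by
    rw [hζdef, ← Complex.exp_nat_mul]
    have hsplit : (m : ℂ) * (Real.pi * Complex.I / 2 ^ n) =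
        (k : ℂ) * Real.pi * Complex.I / 2 ^ n +
          (Real.pi * Complex.I + (-q : ℤ) * (2 * Real.pi * Complex.I)) := by
      have h2n : ((2 : ℂ) ^ n) ≠ 0 := pow_ne_zero _ two_ne_zero
      have hc : (m : ℂ) - k = ((1 : ℂ) - 2 * q) * 2 ^ n := by
        have := hjk
        have : ((j : ℂ)) - k = ((1 : ℂ) - 2 * q) * 2 ^ n := by
          exact_mod_cast congrArg (Int.cast : ℤ → ℂ) this
        rw [show ((m : ℂ)) = ((j : ℂ)) by exact_mod_cast congrArg (Int.cast : ℤ → ℂ) hmj]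
        exact this
      field_simp
      ring_nf
      ring_nf at hc
      push_cast
      linear_combination hc
    rw [hsplit, Complex.exp_add, Complex.exp_add, Complex.exp_pi_mul_I,
      Complex.exp_int_mul_two_pi_mul_I]
    ring
  -- x = 1 - ζ^m
  have hx_eq : 1 + Complex.exp ((k : ℂ) * Real.pi * Complex.I / 2 ^ n) = 1 - ζ ^ m := by
    rw [hkey]; ring
  have hx : (1 + Complex.exp ((k : ℂ) * Real.pi * Complex.I / 2 ^ n)) ∈ R := by
    rw [hx_eq]
    exact R.sub_mem R.one_mem (R.pow_mem hζmem m)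
  refine ⟨hx, ?_⟩
  -- y = ζ^m satisfies y^(2^(n+1)) = 1 and y ≠ 1
  set y : ℂ := ζ ^ m with hydef
  have hy1 : y ^ (2 ^ (n + 1)) = 1 := by
    rw [hydef, ← pow_mul, mul_comm, pow_mul, hprim.pow_eq_one, one_pow]
  have hyne : y ≠ 1 := by
    intro h1
    have := (hprim.pow_eq_one_iff_dvd m).mp h1
    have hm0 : m ≠ 0 := by
      intro h0
      apply hjne
      omega
    have hmlt : m < 2 ^ (n + 1) := by
      have : (m : ℤ) < N := hmj ▸ hjlt
      rw [hNdef] at this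
      exact_mod_cast this
    have := Nat.le_of_dvd (Nat.pos_of_ne_zero hm0) this
    omega
  obtain ⟨t, ht⟩ := exists_pow_two_pow_eq_neg_one (n + 1) y hy1 hyne
  -- the inverse
  set v : ℂ := (∑ i ∈ Finset.range (2 ^ t), y ^ i) * (1 / 2) with hvdef
  have hv : v ∈ R := by
    refine R.mul_mem (Subring.sum_mem R fun i _ => R.pow_mem (R.pow_mem hζmem m) i) hhalf
  have hmul : (1 + Complex.exp ((k : ℂ) * Real.pi * Complex.I / 2 ^ n)) * v = 1 := by
    rw [hx_eq, hvdef]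
    have hg := geom_sum_mul y (2 ^ t)
    rw [ht] at hg
    have : (1 - y) * (∑ i ∈ Finset.range (2 ^ t), y ^ i) = 2 := by
      linear_combination -hg
    rw [← mul_assoc, this]
    norm_num
  exact IsUnit.of_mul_eq_one ⟨v, hv⟩ (Subtype.ext (by push_cast; exact hmul))
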